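/- arXiv:1502.07616 — 2 statements merged into one kernel-verified Lean document; each statement's English description precedes it below -/
import Mathlib

section
/- There exists a constant K > 1 such that for every f ∈ L¹([0,1]) (with respect to Lebesgue measure), the function f∘T belongs to L¹([0,1]) and ‖f∘T‖_{L¹} ≤ K ‖f‖_{L¹}. -/
open MeasureTheory

/-- The Gauss map `T(x) = 1/x − ⌊1/x⌋` for `x ≠ 0`, `T(0) = 0`. -/
noncomputable def gaussMap (x : ℝ) : ℝ := if x = 0 then 0 else Int.fract (1 / x)

/-!
On `(1/(n+1), 1/n]` the Gauss map is inverted by the branch `u ↦ 1/(u+n)`, which is Lipschitz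
with constant `1/n²` on `[0, ∞)`. Hence `|T⁻¹(s) ∩ [0,1]| ≤ ∑ 1/n² · |s ∩ [0,1]| = (π²/6)|s ∩ [0,1]|`:
`T` pushes Lebesgue measure on `[0,1]` forward to at most `π²/6` times itself, and the `L¹` bound
follows by change of variables.
-/

open Set Real
open scoped ENNReal

namespace MeasureTheory

variable {α β E : Type*} [MeasurableSpace α] [MeasurableSpace β] [NormedAddCommGroup E]
  {μ : Measure α} {ν : Measure β} {g : α → β} {c : ℝ≥0∞} {f : β → E}

theorem Integrable.comp_of_map_le_smul (hg : AEMeasurable g μ) (hmap : μ.map g ≤ c • ν)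
    (hc : c ≠ ∞) (hf : Integrable f ν) : Integrable (f ∘ g) μ :=
  ((hf.smul_measure hc).mono_measure hmap).comp_aemeasurable hg

theorem integral_norm_comp_le_of_map_le_smul (hg : AEMeasurable g μ) (hmap : μ.map g ≤ c • ν)
    (hc : c ≠ ∞) (hf : Integrable f ν) :
    ∫ x, ‖f (g x)‖ ∂μ ≤ c.toReal * ∫ y, ‖f y‖ ∂ν := by
  have hf_map : Integrable f (μ.map g) := (hf.smul_measure hc).mono_measure hmap
  calc ∫ x, ‖f (g x)‖ ∂μ = ∫ y, ‖f y‖ ∂(μ.map g) :=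
        (integral_map hg hf_map.aestronglyMeasurable.norm).symm
    _ ≤ ∫ y, ‖f y‖ ∂(c • ν) :=
        integral_mono_measure hmap (.of_forall fun _ ↦ norm_nonneg _) (hf.smul_measure hc).norm
    _ = c.toReal * ∫ y, ‖f y‖ ∂ν := integral_smul_measure _ _

end MeasureTheory

theorem measurable_gaussMap : Measurable gaussMap :=
  Measurable.ite (measurableSet_singleton 0) measurable_const
    (measurable_fract.comp (measurable_const.div measurable_id))

theorem lipschitzOnWith_inv_add_const {a : ℝ} (ha : 0 < a) :
    LipschitzOnWith (a ^ 2)⁻¹.toNNReal (fun u : ℝ ↦ (u + a)⁻¹) (Ici 0) := by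
  refine LipschitzOnWith.of_dist_le_mul fun u (hu : 0 ≤ u) v (hv : 0 ≤ v) ↦ ?_
  have hua : 0 < u + a := by linarith
  have hva : 0 < v + a := by linarith
  rw [Real.coe_toNNReal _ (by positivity), dist_eq, dist_eq, inv_sub_inv hua.ne' hva.ne', abs_div,
    abs_of_pos (mul_pos hua hva), abs_sub_comm, add_sub_add_right_eq_sub,
    div_le_iff₀ (mul_pos hua hva)]
  have ha2 : a ^ 2 ≤ (u + a) * (v + a) := by nlinarith
  calc |u - v| = (a ^ 2)⁻¹ * |u - v| * a ^ 2 := by field_simp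
    _ ≤ (a ^ 2)⁻¹ * |u - v| * ((u + a) * (v + a)) := by gcongr

theorem volume_image_inv_add_const_le {a : ℝ} (ha : 0 < a) {t : Set ℝ} (ht : t ⊆ Ici 0) :
    volume ((fun u : ℝ ↦ (u + a)⁻¹) '' t) ≤ ENNReal.ofReal (a ^ 2)⁻¹ * volume t := by
  -- `volume = μH[1]` on `ℝ`, and a `K`-Lipschitz map scales `μH[1]` by at most `K`.
  simpa [← hausdorffMeasure_real, ENNReal.ofReal] using
    ((lipschitzOnWith_inv_add_const ha).mono ht).hausdorffMeasure_image_le zero_le_one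

theorem exists_inv_gaussMap_add_eq {x : ℝ} (hx : x ∈ Ioc 0 1) :
    ∃ n : ℕ, (gaussMap x + (n + 1))⁻¹ = x := by
  have hfloor : 1 ≤ ⌊x⁻¹⌋ := Int.le_floor.2 (by simpa using one_le_inv_iff₀.2 hx)
  obtain ⟨n, hn⟩ := Int.eq_ofNat_of_zero_le (sub_nonneg.2 hfloor)
  refine ⟨n, ?_⟩
  have : (⌊x⁻¹⌋ : ℝ) = n + 1 := by exact_mod_cast (eq_add_of_sub_eq hn)
  rw [gaussMap, if_neg hx.1.ne', one_div, ← Int.self_sub_floor, this, sub_add_cancel, inv_inv]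

theorem volume_preimage_gaussMap_inter_Icc_le (s : Set ℝ) :
    volume (gaussMap ⁻¹' s ∩ Icc 0 1) ≤ ENNReal.ofReal (π ^ 2 / 6) * volume (s ∩ Icc 0 1) := by
  let branch (n : ℕ) (u : ℝ) : ℝ := (u + (n + 1))⁻¹
  have hcover : gaussMap ⁻¹' s ∩ Icc 0 1 ⊆ {0} ∪ ⋃ n : ℕ, branch n '' (s ∩ Icc 0 1) := by
    rintro x ⟨hxs, hx0, hx1⟩
    rcases hx0.eq_or_lt with rfl | hx0
    · exact Or.inl rfl
    obtain ⟨n, hn⟩ := exists_inv_gaussMap_add_eq ⟨hx0, hx1⟩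
    have hT : gaussMap x ∈ Icc 0 1 := by
      rw [gaussMap, if_neg hx0.ne']
      exact ⟨Int.fract_nonneg _, (Int.fract_lt_one _).le⟩
    exact Or.inr (mem_iUnion.2 ⟨n, gaussMap x, ⟨hxs, hT⟩, hn⟩)
  have hzeta : HasSum (fun n : ℕ ↦ (((n : ℝ) + 1) ^ 2)⁻¹) (π ^ 2 / 6) := by
    have h := (hasSum_nat_add_iff (f := fun n : ℕ ↦ 1 / (n : ℝ) ^ 2) 1).2
      (by simpa using hasSum_zeta_two)
    simpa [one_div] using h
  calc volume (gaussMap ⁻¹' s ∩ Icc 0 1)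
      ≤ volume ({0} ∪ ⋃ n : ℕ, branch n '' (s ∩ Icc 0 1)) := measure_mono hcover
    _ ≤ ∑' n : ℕ, volume (branch n '' (s ∩ Icc 0 1)) :=
        (measure_union_le _ _).trans (by rw [measure_singleton, zero_add]; exact measure_iUnion_le _)
    _ ≤ ∑' n : ℕ, ENNReal.ofReal (((n : ℝ) + 1) ^ 2)⁻¹ * volume (s ∩ Icc 0 1) :=
        ENNReal.tsum_le_tsum fun n ↦
          volume_image_inv_add_const_le (by positivity) (inter_subset_right.trans Icc_subset_Ici_self)
    _ = ENNReal.ofReal (π ^ 2 / 6) * volume (s ∩ Icc 0 1) := by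
        rw [ENNReal.tsum_mul_right, ← ENNReal.ofReal_tsum_of_nonneg (fun _ ↦ by positivity)
          hzeta.summable, hzeta.tsum_eq]

theorem map_gaussMap_restrict_Icc_le :
    (volume.restrict (Icc (0 : ℝ) 1)).map gaussMap ≤
      ENNReal.ofReal (π ^ 2 / 6) • volume.restrict (Icc (0 : ℝ) 1) := by
  refine Measure.le_iff.2 fun s hs ↦ ?_
  rw [Measure.map_apply measurable_gaussMap hs, Measure.smul_apply, smul_eq_mul,
    Measure.restrict_apply (measurable_gaussMap hs), Measure.restrict_apply hs]
  exact volume_preimage_gaussMap_inter_Icc_le s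

theorem comp_gaussMap_L1_bound :
    ∃ K : ℝ, 1 < K ∧ ∀ f : ℝ → ℂ, IntegrableOn f (Set.Icc (0:ℝ) 1) →
      IntegrableOn (fun x => f (gaussMap x)) (Set.Icc (0:ℝ) 1) ∧
      (∫ x in Set.Icc (0:ℝ) 1, ‖f (gaussMap x)‖) ≤ K * ∫ x in Set.Icc (0:ℝ) 1, ‖f x‖ := by
  have hK : 0 ≤ π ^ 2 / 6 := by positivity
  refine ⟨π ^ 2 / 6, by nlinarith [pi_gt_three], fun f hf ↦ ⟨?_, ?_⟩⟩
  · exact hf.comp_of_map_le_smul measurable_gaussMap.aemeasurable map_gaussMap_restrict_Icc_le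
      ENNReal.ofReal_ne_top
  · simpa [ENNReal.toReal_ofReal hK] using integral_norm_comp_le_of_map_le_smul
      measurable_gaussMap.aemeasurable map_gaussMap_restrict_Icc_le ENNReal.ofReal_ne_top hf
end

section
/- Let s ∈ ℂ with Re(s) > 1. Let f : ℂ → ℂ be holomorphic and bounded on 𝔻, not identically zero on 𝔻, and let λ ∈ ℂ be such that Σ_{n=1}^∞ (x+n)^{−2s} f(1/(x+n)) = λ f(x) for all x ∈ [0,1], where (x+n)^{−2s} := exp(−2s·log(x+n)) with the real logarithm. Then |λ| < 1. -/
/-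
With `g(y) = (1 + y)‖f y‖` and `R = max_{[0,1]} g`, attained at `x₀`, each term of the series at
`x₀` is bounded by `t⁻²·R t/(t + 1) = R (1/t − 1/(t + 1))` with `t = x₀ + n + 1`, because
`Re(2s) > 2`. The bounds telescope to `R/(x₀ + 1) = ‖f x₀‖`, and the inequality is strict at
`n = 1`, so `‖λ‖‖f x₀‖ < ‖f x₀‖`. That `f x₀ ≠ 0` comes from `R > 0`: by the identity theorem `f`
cannot vanish on all of `[0, 1]`.
-/

open Complex

/-- The disc `𝔻 = {z : |z − 2/3| < 1}`. -/
def gaussDisc : Set ℂ := Metric.ball ((2:ℂ)/3) 1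

open Filter Set Topology

theorem hasSum_sub_succ_of_antitone {u : ℕ → ℝ} (hu : Antitone u)
    (hlim : Tendsto u atTop (𝓝 0)) : HasSum (fun n ↦ u n - u (n + 1)) (u 0) := by
  rw [hasSum_iff_tendsto_nat_of_nonneg (fun n ↦ sub_nonneg.2 (hu n.le_succ))]
  simp only [Finset.sum_range_sub']
  simpa using tendsto_const_nhds.sub hlim

theorem hasSum_inv_sub_inv {x : ℝ} (hx : -1 < x) :
    HasSum (fun n : ℕ ↦ (x + n + 1)⁻¹ - (x + n + 1 + 1)⁻¹) (x + 1)⁻¹ := by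
  have hlim : Tendsto (fun n : ℕ ↦ x + n + 1) atTop atTop :=
    tendsto_atTop_add_const_right _ 1 (tendsto_atTop_add_const_left _ x tendsto_natCast_atTop_atTop)
  have hanti : Antitone fun n : ℕ ↦ (x + n + 1)⁻¹ := fun m n hmn ↦ by
    have : (m : ℝ) ≤ n := by exact_mod_cast hmn
    exact inv_anti₀ (by linarith [m.cast_nonneg (α := ℝ)]) (by linarith)
  simpa [add_assoc] using hasSum_sub_succ_of_antitone hanti hlim.inv_tendsto_atTop

theorem le_mul_div_of_one_add_inv_mul_le {t a R : ℝ} (ht : 0 < t) (h : (1 + t⁻¹) * a ≤ R) :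
    a ≤ R * t / (t + 1) := by
  rw [le_div_iff₀ (by linarith)]
  calc a * (t + 1) = (1 + t⁻¹) * a * t := by field_simp
    _ ≤ R * t := by gcongr

theorem rpow_neg_two_mul_div {t : ℝ} (ht : 0 < t) (R : ℝ) :
    t ^ (-2 : ℝ) * (R * t / (t + 1)) = R * (t⁻¹ - (t + 1)⁻¹) := by
  rw [Real.rpow_neg ht.le, Real.rpow_two]
  field_simp
  ring

theorem rpow_neg_mul_le_mul_inv_sub_inv {t p a R : ℝ} (ht : 1 ≤ t) (hp : 2 ≤ p) (hR : 0 ≤ R)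
    (h : (1 + t⁻¹) * a ≤ R) : t ^ (-p) * a ≤ R * (t⁻¹ - (t + 1)⁻¹) := by
  have ht₀ : 0 < t := by linarith
  calc t ^ (-p) * a ≤ t ^ (-p) * (R * t / (t + 1)) := by
        gcongr; exact le_mul_div_of_one_add_inv_mul_le ht₀ h
    _ ≤ t ^ (-2 : ℝ) * (R * t / (t + 1)) := by
        gcongr
    _ = R * (t⁻¹ - (t + 1)⁻¹) := rpow_neg_two_mul_div ht₀ R

theorem rpow_neg_mul_lt_mul_inv_sub_inv {t p a R : ℝ} (ht : 1 < t) (hp : 2 < p) (hR : 0 < R)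
    (h : (1 + t⁻¹) * a ≤ R) : t ^ (-p) * a < R * (t⁻¹ - (t + 1)⁻¹) := by
  have ht₀ : 0 < t := by linarith
  calc t ^ (-p) * a ≤ t ^ (-p) * (R * t / (t + 1)) := by
        gcongr; exact le_mul_div_of_one_add_inv_mul_le ht₀ h
    _ < t ^ (-2 : ℝ) * (R * t / (t + 1)) := by
        gcongr
        exact Real.rpow_lt_rpow_of_exponent_lt ht (by linarith)
    _ = R * (t⁻¹ - (t + 1)⁻¹) := rpow_neg_two_mul_div ht₀ R

theorem summable_and_tsum_rpow_neg_mul_lt {φ : ℝ → ℝ} {x p R : ℝ} (hx : 0 ≤ x) (hp : 2 < p)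
    (hR : 0 < R) (hφ₀ : ∀ y, 0 ≤ φ y) (hφ : ∀ y ∈ Icc (0 : ℝ) 1, (1 + y) * φ y ≤ R) :
    Summable (fun n : ℕ ↦ (x + n + 1) ^ (-p) * φ (x + n + 1)⁻¹) ∧
      ∑' n : ℕ, (x + n + 1) ^ (-p) * φ (x + n + 1)⁻¹ < R * (x + 1)⁻¹ := by
  have hb := (hasSum_inv_sub_inv (by linarith : -1 < x)).mul_left R
  have ht : ∀ n : ℕ, 1 ≤ x + n + 1 := fun n ↦ by linarith [n.cast_nonneg (α := ℝ)]
  have hφt : ∀ n : ℕ, (1 + (x + n + 1)⁻¹) * φ (x + n + 1)⁻¹ ≤ R := fun n ↦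
    hφ _ ⟨inv_nonneg.2 (by linarith [ht n]), inv_le_one_of_one_le₀ (ht n)⟩
  have hle : ∀ n : ℕ, (x + n + 1) ^ (-p) * φ (x + n + 1)⁻¹ ≤
      R * ((x + n + 1)⁻¹ - (x + n + 1 + 1)⁻¹) := fun n ↦
    rpow_neg_mul_le_mul_inv_sub_inv (ht n) hp.le hR.le (hφt n)
  have hlt : (x + (1 : ℕ) + 1) ^ (-p) * φ (x + (1 : ℕ) + 1)⁻¹ <
      R * ((x + (1 : ℕ) + 1)⁻¹ - (x + (1 : ℕ) + 1 + 1)⁻¹) :=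
    rpow_neg_mul_lt_mul_inv_sub_inv (by push_cast; linarith) hp hR (hφt 1)
  have hsum : Summable (fun n : ℕ ↦ (x + n + 1) ^ (-p) * φ (x + n + 1)⁻¹) :=
    hb.summable.of_nonneg_of_le (fun n ↦ mul_nonneg (by positivity) (hφ₀ _)) hle
  exact ⟨hsum, hb.tsum_eq ▸ hsum.tsum_lt_tsum hle hlt hb.summable⟩

theorem norm_exp_mul_ofReal_log {t : ℝ} (ht : 0 < t) (w : ℂ) :
    ‖exp (w * Real.log t)‖ = t ^ w.re := by
  rw [norm_exp, re_mul_ofReal, Real.rpow_def_of_pos ht, mul_comm]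

theorem ofReal_mem_gaussDisc {x : ℝ} (hx : x ∈ Icc (0 : ℝ) 1) : (x : ℂ) ∈ gaussDisc := by
  have : (x : ℂ) - 2 / 3 = ((x - 2 / 3 : ℝ) : ℂ) := by push_cast; ring
  rw [gaussDisc, Metric.mem_ball, dist_eq_norm, this, norm_real, Real.norm_eq_abs, abs_sub_lt_iff]
  constructor <;> linarith [hx.1, hx.2]

theorem AnalyticOnNhd.exists_mem_Icc_ne_zero {f : ℂ → ℂ} {U : Set ℂ} (hf : AnalyticOnNhd ℂ f U)
    (hU : IsPreconnected U) {a b : ℝ} (hab : a < b) (hsub : ∀ x ∈ Icc a b, (x : ℂ) ∈ U)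
    (hne : ∃ z ∈ U, f z ≠ 0) : ∃ x ∈ Icc a b, f x ≠ 0 := by
  by_contra! hzero
  obtain ⟨z, hz, hfz⟩ := hne
  obtain ⟨m, hm⟩ := nonempty_Ioo.2 hab
  have hreal : ∃ᶠ y : ℝ in 𝓝[≠] m, f y = 0 :=
    (eventually_nhdsWithin_of_eventually_nhds (Icc_mem_nhds hm.1 hm.2)).frequently.mono hzero
  have hmap : Tendsto ((↑) : ℝ → ℂ) (𝓝[≠] m) (𝓝[≠] (m : ℂ)) :=
    continuous_ofReal.continuousWithinAt.tendsto_nhdsWithin fun y hy ↦ ofReal_injective.ne hy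
  exact hfz (hf.eqOn_zero_of_preconnected_of_frequently_eq_zero hU (hsub m (Ioo_subset_Icc_self hm))
    (hmap.frequently hreal) hz)

theorem transferOp_spectral_radius_re_gt_one_general (s : ℂ) (hs : 1 < s.re)
    (f : ℂ → ℂ)
    (hf_holo : DifferentiableOn ℂ f gaussDisc)
    (hf_ne : ∃ z ∈ gaussDisc, f z ≠ 0)
    (lam : ℂ)
    (heig : ∀ x : ℝ, x ∈ Set.Icc (0:ℝ) 1 →
      ∑' n : ℕ, Complex.exp (-(2 * s) * (Real.log (x + (n : ℕ) + 1) : ℂ))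
          * f (1 / ((x : ℂ) + (n : ℕ) + 1))
        = lam * f (x : ℂ)) :
    ‖lam‖ < 1 := by
  obtain ⟨x₁, hx₁, hfx₁⟩ := (hf_holo.analyticOnNhd Metric.isOpen_ball).exists_mem_Icc_ne_zero
    (convex_ball _ _).isPreconnected zero_lt_one (fun _ ↦ ofReal_mem_gaussDisc) hf_ne
  have hcont : ContinuousOn (fun x : ℝ ↦ (1 + x) * ‖f x‖) (Icc 0 1) :=
    (continuousOn_const.add continuousOn_id).mul
      (hf_holo.continuousOn.comp continuous_ofReal.continuousOn fun _ ↦ ofReal_mem_gaussDisc).norm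
  obtain ⟨x₀, hx₀, hmax⟩ := isCompact_Icc.exists_isMaxOn ⟨x₁, hx₁⟩ hcont
  have hR : 0 < (1 + x₀) * ‖f x₀‖ :=
    (mul_pos (by linarith [hx₁.1]) (norm_pos_iff.2 hfx₁)).trans_le (hmax hx₁)
  obtain ⟨hsum, hlt⟩ := summable_and_tsum_rpow_neg_mul_lt (φ := fun y ↦ ‖f y‖) hx₀.1
    (by linarith : 2 < 2 * s.re) hR (fun _ ↦ norm_nonneg _) fun y hy ↦ hmax hy
  have hterm : ∀ n : ℕ, ‖exp (-(2 * s) * (Real.log (x₀ + (n : ℕ) + 1) : ℂ))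
      * f (1 / ((x₀ : ℂ) + (n : ℕ) + 1))‖ = (x₀ + n + 1) ^ (-(2 * s.re)) * ‖f ↑(x₀ + n + 1)⁻¹‖ := by
    intro n
    rw [norm_mul, norm_exp_mul_ofReal_log (by linarith [hx₀.1, n.cast_nonneg (α := ℝ)])]
    push_cast
    simp
  have hfx₀ : 0 < ‖f x₀‖ := pos_of_mul_pos_right hR (by linarith [hx₀.1])
  refine (mul_lt_iff_lt_one_left hfx₀).1 ?_
  calc ‖lam‖ * ‖f x₀‖ = ‖∑' n : ℕ, exp (-(2 * s) * (Real.log (x₀ + (n : ℕ) + 1) : ℂ))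
        * f (1 / ((x₀ : ℂ) + (n : ℕ) + 1))‖ := by rw [heig x₀ hx₀, norm_mul]
    _ ≤ ∑' n : ℕ, (x₀ + n + 1) ^ (-(2 * s.re)) * ‖f ↑(x₀ + n + 1)⁻¹‖ := by
        simp_rw [← hterm] at hsum ⊢
        exact norm_tsum_le_tsum_norm hsum
    _ < (1 + x₀) * ‖f x₀‖ * (x₀ + 1)⁻¹ := hlt
    _ = ‖f x₀‖ := by
        rw [add_comm x₀, mul_right_comm, mul_inv_cancel₀ (by linarith [hx₀.1]), one_mul]

theorem transferOp_spectral_radius_re_gt_one (s : ℂ) (hs : 1 < s.re)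
    (f : ℂ → ℂ)
    (hf_holo : DifferentiableOn ℂ f gaussDisc)
    (hf_bdd : ∃ M : ℝ, ∀ z ∈ gaussDisc, ‖f z‖ ≤ M)
    (hf_ne : ∃ z ∈ gaussDisc, f z ≠ 0)
    (lam : ℂ)
    (heig : ∀ x : ℝ, x ∈ Set.Icc (0:ℝ) 1 →
      ∑' n : ℕ, Complex.exp (-(2 * s) * (Real.log (x + (n : ℕ) + 1) : ℂ))
          * f (1 / ((x : ℂ) + (n : ℕ) + 1))
        = lam * f (x : ℂ)) :
    ‖lam‖ < 1 :=
  transferOp_spectral_radius_re_gt_one_general s hs f hf_holo hf_ne lam heig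
end
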